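/- Let M ∈ U(2,1;O₁₁) fix q∞, i.e. M·(1,0,0)ᵗ is a complex scalar multiple of (1,0,0)ᵗ. Then M or −M lies in the subgroup of GL(3,ℂ) generated by the four matrices R₁, R₂, R₃, T. Equivalently, the stabiliser of q∞ in PU(2,1;O₁₁) = U(2,1;O₁₁)/{±I} is generated by the classes of R₁, R₂, R₃ and T. -/

import Mathlib

noncomputable section

open Matrix Complex

/-- The Gram matrix `J` of the Hermitian form of signature (2,1). -/
def Jmat : Matrix (Fin 3) (Fin 3) ℂ := !![0,0,1; 0,1,0; 1,0,0]

lemma Jmat_mul_Jmat : Jmat * Jmat = 1 := by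
  simp [Jmat, Matrix.mul_fin_three, Matrix.one_fin_three]

/-- A matrix satisfying `Mᴴ J M = J`, viewed as an element of `GL (Fin 3) ℂ`. -/
def toGL (M : Matrix (Fin 3) (Fin 3) ℂ) (h : Mᴴ * Jmat * M = Jmat) : GL (Fin 3) ℂ where
  val := M
  inv := Jmat * Mᴴ * Jmat
  inv_val := by
    calc (Jmat * Mᴴ * Jmat) * M = Jmat * (Mᴴ * Jmat * M) := by
          simp only [Matrix.mul_assoc]
    _ = 1 := by rw [h, Jmat_mul_Jmat]
  val_inv := by
    apply mul_eq_one_comm.mp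
    calc (Jmat * Mᴴ * Jmat) * M = Jmat * (Mᴴ * Jmat * M) := by
          simp only [Matrix.mul_assoc]
    _ = 1 := by rw [h, Jmat_mul_Jmat]

/-- `ω₁₁ = (1 + i√11)/2`. -/
def ω : ℂ := (1 + Complex.I * (√11 : ℝ)) / 2

/-- The ring of integers `O₁₁ = ℤ[ω₁₁]` of `ℚ(√-11)`, as a subset of `ℂ`. -/
def O11 : Set ℂ := {z | ∃ a b : ℤ, z = (a : ℂ) + (b : ℂ) * ω}

def I₀ : Matrix (Fin 3) (Fin 3) ℂ := !![0,0,1; 0,-1,0; 1,0,0]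

def R₁ : Matrix (Fin 3) (Fin 3) ℂ := !![1,0,0; 0,-1,0; 0,0,1]

def R₂ : Matrix (Fin 3) (Fin 3) ℂ := !![1, 1, -((starRingEnd ℂ) ω); 0,-1,1; 0,0,1]

def R₃ : Matrix (Fin 3) (Fin 3) ℂ :=
  !![1, (starRingEnd ℂ) ω, -1 - (starRingEnd ℂ) ω; 0, -1, ω; 0,0,1]

def T : Matrix (Fin 3) (Fin 3) ℂ := !![1, 0, Complex.I*(√11:ℝ); 0,1,0; 0,0,1]

lemma hI₀ : I₀ᴴ * Jmat * I₀ = Jmat := by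
  ext i j
  fin_cases i <;> fin_cases j <;>
    simp [Matrix.mul_apply, Fin.sum_univ_three, Jmat, I₀, Matrix.conjTranspose_apply,
      Matrix.vecHead, Matrix.vecTail]

lemma hR₁ : R₁ᴴ * Jmat * R₁ = Jmat := by
  ext i j
  fin_cases i <;> fin_cases j <;>
    simp [Matrix.mul_apply, Fin.sum_univ_three, Jmat, R₁, Matrix.conjTranspose_apply,
      Matrix.vecHead, Matrix.vecTail]

lemma hR₂ : R₂ᴴ * Jmat * R₂ = Jmat := by
  ext i j
  fin_cases i <;> fin_cases j <;>
    simp [Matrix.mul_apply, Fin.sum_univ_three, Jmat, R₂, ω, Matrix.conjTranspose_apply,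
      Matrix.vecHead, Matrix.vecTail] <;>
    ring_nf <;>
    simp [Complex.ext_iff, ← Complex.ofReal_pow, Real.sq_sqrt] <;>
    ring_nf

lemma hR₃ : R₃ᴴ * Jmat * R₃ = Jmat := by
  ext i j
  fin_cases i <;> fin_cases j <;>
    simp [Matrix.mul_apply, Fin.sum_univ_three, Jmat, R₃, ω, Matrix.conjTranspose_apply,
      Matrix.vecHead, Matrix.vecTail] <;>
    ring_nf <;>
    simp [Complex.ext_iff, ← Complex.ofReal_pow, Real.sq_sqrt] <;>
    ring_nf <;>
    simp

lemma hT : Tᴴ * Jmat * T = Jmat := by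
  ext i j
  fin_cases i <;> fin_cases j <;>
    simp [Matrix.mul_apply, Fin.sum_univ_three, Jmat, T, Matrix.conjTranspose_apply,
      Matrix.vecHead, Matrix.vecTail]

/-!
Since `M` fixes `q∞` it is upper triangular, and the form forces `conj M₀₀ · M₂₂ = 1` and
`|M₁₁|² = 1`. The only units of `O₁₁` are `±1`, so up to the sign `±I` and the reflection `R₁`,
`M` is a Heisenberg translation `heisenberg b c` with `b, c ∈ O₁₁` and `c + conj c = -|b|²`.
Now `R₁R₂` and `R₁R₃` are Heisenberg translations over `b = 1` and `b = 1 - ω`, which span `O₁₁`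
additively, so every `b ∈ O₁₁` is reached by some generated `heisenberg b c₀`. Two translations
over the same `b` differ by a central one `heisenberg 0 (c - c₀)` with `c - c₀` purely imaginary
in `O₁₁`, hence an integer multiple of `i√11 = 2ω - 1`, i.e. a power of `T`.
-/

open ComplexConjugate

lemma conj_ω : conj ω = 1 - ω := by
  rw [ω, map_div₀, map_add, map_one, map_mul, conj_I, conj_ofReal, map_ofNat]
  ring

lemma ω_mul_ω : ω * ω = ω - 3 := by
  have h11 : ((√11 : ℝ) : ℂ) ^ 2 = 11 := by
    rw [← Complex.ofReal_pow, Real.sq_sqrt (by norm_num)]; norm_num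
  rw [ω]
  linear_combination (Complex.I ^ 2 / 4) * h11 + 11 / 4 * Complex.I_sq

lemma I_mul_sqrt_eleven : Complex.I * (√11 : ℝ) = 2 * ω - 1 := by
  rw [ω]; ring

def O11Ring : Subring ℂ where
  carrier := O11
  mul_mem' := by
    rintro _ _ ⟨a, b, rfl⟩ ⟨c, d, rfl⟩
    exact ⟨a * c - 3 * b * d, a * d + b * c + b * d,
      by push_cast; linear_combination (b * d : ℂ) * ω_mul_ω⟩
  one_mem' := ⟨1, 0, by simp⟩
  add_mem' := by
    rintro _ _ ⟨a, b, rfl⟩ ⟨c, d, rfl⟩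
    exact ⟨a + c, b + d, by push_cast; ring⟩
  zero_mem' := ⟨0, 0, by simp⟩
  neg_mem' := by
    rintro _ ⟨a, b, rfl⟩
    exact ⟨-a, -b, by push_cast; ring⟩

lemma ω_mem_O11Ring : ω ∈ O11Ring := ⟨0, 1, by simp⟩

lemma conj_mem_O11Ring {z : ℂ} (hz : z ∈ O11Ring) : conj z ∈ O11Ring := by
  obtain ⟨a, b, rfl⟩ := hz
  exact ⟨a + b, -b, by simp only [map_add, map_mul, map_intCast, conj_ω]; push_cast; ring⟩

lemma normSq_add_mul_ω (a b : ℤ) : normSq (a + b * ω) = a ^ 2 + a * b + 3 * b ^ 2 := by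
  have : (a + b * ω : ℂ) = (a + b / 2 : ℝ) + (b * √11 / 2 : ℝ) * Complex.I := by
    simp only [ω, ofReal_add, ofReal_intCast, ofReal_div, ofReal_ofNat, ofReal_mul]
    ring
  rw [this, normSq_add_mul_I]
  linear_combination ((b : ℝ) ^ 2 / 4) * Real.sq_sqrt (show (0 : ℝ) ≤ 11 by norm_num)

lemma exists_normSq_eq_intCast {z : ℂ} (hz : z ∈ O11Ring) : ∃ n : ℤ, normSq z = n := by
  obtain ⟨a, b, rfl⟩ := hz
  exact ⟨a ^ 2 + a * b + 3 * b ^ 2, by rw [normSq_add_mul_ω]; push_cast; ring⟩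

lemma eq_one_or_neg_one_of_normSq_eq_one {z : ℂ} (hz : z ∈ O11Ring) (h : normSq z = 1) :
    z = 1 ∨ z = -1 := by
  obtain ⟨a, b, rfl⟩ := hz
  have hab : a ^ 2 + a * b + 3 * b ^ 2 = 1 := by
    rw [normSq_add_mul_ω] at h; exact_mod_cast h
  have hb : b = 0 := by nlinarith [sq_nonneg (2 * a + b), sq_nonneg b]
  subst hb
  have ha : a ^ 2 = 1 := by simpa using hab
  rcases sq_eq_one_iff.mp ha with rfl | rfl <;> simp

lemma eq_and_eq_one_or_neg_one_of_conj_mul_eq_one {z w : ℂ} (hz : z ∈ O11Ring)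
    (hw : w ∈ O11Ring) (h : conj z * w = 1) : w = z ∧ (z = 1 ∨ z = -1) := by
  obtain ⟨n, hn⟩ := exists_normSq_eq_intCast hz
  obtain ⟨m, hm⟩ := exists_normSq_eq_intCast hw
  have hnm : n * m = 1 := by
    have := congrArg normSq h
    rw [map_mul, normSq_conj, hn, hm, map_one] at this
    exact_mod_cast this
  have hn1 : n = 1 := Int.eq_one_of_mul_eq_one_right (by exact_mod_cast hn ▸ normSq_nonneg z) hnm
  rcases eq_one_or_neg_one_of_normSq_eq_one hz (by rw [hn, hn1, Int.cast_one]) with rfl | rfl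
  · simpa using h
  · exact ⟨by simpa [neg_eq_iff_eq_neg] using h, Or.inr rfl⟩

lemma conj_eq_self_and_mul_self_eq_one {z : ℂ} (hz : z = 1 ∨ z = -1) :
    conj z = z ∧ z * z = 1 := by
  rcases hz with rfl | rfl <;> simp

lemma exists_eq_intCast_mul_of_add_conj_eq_zero {z : ℂ} (hz : z ∈ O11Ring)
    (h : z + conj z = 0) : ∃ k : ℤ, z = k * (2 * ω - 1) := by
  obtain ⟨a, b, rfl⟩ := hz
  simp only [map_add, map_mul, map_intCast, conj_ω] at h
  have hb : b = -2 * a := by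
    have : ((2 * a + b : ℤ) : ℂ) = 0 := by push_cast; linear_combination h
    have : 2 * a + b = 0 := by exact_mod_cast this
    omega
  exact ⟨-a, by subst hb; push_cast; ring⟩

def heisenberg (b c : ℂ) : Matrix (Fin 3) (Fin 3) ℂ := !![1, b, c; 0, 1, -conj b; 0, 0, 1]

lemma heisenberg_mul (b c b' c' : ℂ) :
    heisenberg b c * heisenberg b' c' = heisenberg (b + b') (c + c' - b * conj b') := by
  ext i j
  fin_cases i <;> fin_cases j <;> simp [heisenberg, Matrix.mul_apply, Fin.sum_univ_three] <;> ring

lemma heisenberg_zero_zero : heisenberg 0 0 = 1 := by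
  ext i j
  fin_cases i <;> fin_cases j <;> simp [heisenberg]

lemma heisenberg_mul_heisenberg_neg (b c : ℂ) :
    heisenberg b c * heisenberg (-b) (-c - b * conj b) = 1 := by
  rw [heisenberg_mul, map_neg, ← heisenberg_zero_zero]
  congr 1 <;> ring

lemma R₁_mul_R₂ : R₁ * R₂ = heisenberg 1 (ω - 1) := by
  ext i j
  fin_cases i <;> fin_cases j <;>
    simp [R₁, R₂, heisenberg, Matrix.mul_apply, Fin.sum_univ_three, conj_ω]

lemma R₁_mul_R₃ : R₁ * R₃ = heisenberg (1 - ω) (ω - 2) := by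
  ext i j
  fin_cases i <;> fin_cases j <;>
    simp [R₁, R₃, heisenberg, Matrix.mul_apply, Fin.sum_univ_three, conj_ω]
  ring

lemma T_eq_heisenberg : T = heisenberg 0 (2 * ω - 1) := by
  ext i j
  fin_cases i <;> fin_cases j <;> simp [T, heisenberg, I_mul_sqrt_eleven]

lemma R₁_eq_diagonal : R₁ = diagonal ![1, -1, 1] := by
  ext i j
  fin_cases i <;> fin_cases j <;> simp [R₁]

def generatedMatrices : Submonoid (Matrix (Fin 3) (Fin 3) ℂ) :=
  (Subgroup.closure ({toGL R₁ hR₁, toGL R₂ hR₂, toGL R₃ hR₃, toGL T hT} :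
    Set (GL (Fin 3) ℂ))).toSubmonoid.map (Units.coeHom _)

local notation "Γ" => generatedMatrices

lemma mem_generatedMatrices_of_mul_eq_one {W W' : Matrix (Fin 3) (Fin 3) ℂ} (hW : W ∈ Γ)
    (h : W * W' = 1) : W' ∈ Γ := by
  obtain ⟨U, hU, rfl⟩ := hW
  refine ⟨U⁻¹, Subgroup.inv_mem _ hU, ?_⟩
  calc ((U⁻¹ : GL (Fin 3) ℂ) : Matrix (Fin 3) (Fin 3) ℂ)
      = ↑U⁻¹ * (↑U * W') := by rw [Units.coeHom_apply] at h; rw [h, mul_one]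
    _ = W' := by rw [← mul_assoc, U.inv_mul, one_mul]

lemma R₁_mem : R₁ ∈ Γ := ⟨toGL R₁ hR₁, Subgroup.subset_closure (by simp), rfl⟩
lemma R₂_mem : R₂ ∈ Γ := ⟨toGL R₂ hR₂, Subgroup.subset_closure (by simp), rfl⟩
lemma R₃_mem : R₃ ∈ Γ := ⟨toGL R₃ hR₃, Subgroup.subset_closure (by simp), rfl⟩
lemma T_mem : T ∈ Γ := ⟨toGL T hT, Subgroup.subset_closure (by simp), rfl⟩

def centralCoords : AddSubgroup ℂ where
  carrier := {c | heisenberg 0 c ∈ Γ}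
  zero_mem' := by simp [heisenberg_zero_zero, one_mem]
  add_mem' {c c'} (hc : heisenberg 0 c ∈ Γ) (hc' : heisenberg 0 c' ∈ Γ) := by
    simpa [heisenberg_mul] using mul_mem hc hc'
  neg_mem' {c} (hc : heisenberg 0 c ∈ Γ) := by
    simpa using mem_generatedMatrices_of_mul_eq_one hc (heisenberg_mul_heisenberg_neg 0 c)

/-- The condition on `c` says that `heisenberg b c` preserves the Hermitian form; keeping `c` in
`O₁₁` makes two lifts of the same `b` differ by a purely imaginary element of `O₁₁`. -/
def horizontalCoords : AddSubgroup ℂ where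
  carrier := {b | b ∈ O11Ring ∧ ∃ c ∈ O11Ring, c + conj c = -(b * conj b) ∧ heisenberg b c ∈ Γ}
  zero_mem' := ⟨zero_mem _, 0, zero_mem _, by simp, by simp [heisenberg_zero_zero, one_mem]⟩
  add_mem' := by
    rintro b b' ⟨hb, c, hcO, hc, hN⟩ ⟨hb', c', hcO', hc', hN'⟩
    refine ⟨add_mem hb hb', c + c' - b * conj b',
      sub_mem (add_mem hcO hcO') (mul_mem hb (conj_mem_O11Ring hb')), ?_, ?_⟩
    · simp only [map_add, map_sub, map_mul, conj_conj]
      linear_combination hc + hc'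
    · simpa [heisenberg_mul] using mul_mem hN hN'
  neg_mem' := by
    rintro b ⟨hb, c, hcO, hc, hN⟩
    refine ⟨neg_mem hb, conj c, conj_mem_O11Ring hcO, ?_, ?_⟩
    · simp only [conj_conj, map_neg, neg_mul_neg]
      linear_combination hc
    · convert mem_generatedMatrices_of_mul_eq_one hN (heisenberg_mul_heisenberg_neg b c) using 2
      linear_combination hc

lemma one_mem_horizontalCoords : 1 ∈ horizontalCoords :=
  ⟨one_mem _, ω - 1, sub_mem ω_mem_O11Ring (one_mem _),
    by simp only [map_sub, conj_ω, map_one, mul_one]; ring,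
    R₁_mul_R₂ ▸ mul_mem R₁_mem R₂_mem⟩

lemma one_sub_ω_mem_horizontalCoords : 1 - ω ∈ horizontalCoords :=
  ⟨sub_mem (one_mem _) ω_mem_O11Ring, ω - 2, sub_mem ω_mem_O11Ring (ofNat_mem _ 2),
    by simp only [map_sub, map_one, map_ofNat, conj_ω]; linear_combination -ω_mul_ω,
    R₁_mul_R₃ ▸ mul_mem R₁_mem R₃_mem⟩

lemma mem_horizontalCoords {b : ℂ} (hb : b ∈ O11Ring) : b ∈ horizontalCoords := by
  obtain ⟨p, q, rfl⟩ := hb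
  have : (p + q * ω : ℂ) = (p + q) • (1 : ℂ) + (-q) • (1 - ω) := by
    simp only [zsmul_eq_mul]; push_cast; ring
  rw [this]
  exact add_mem (zsmul_mem one_mem_horizontalCoords _)
    (zsmul_mem one_sub_ω_mem_horizontalCoords _)

lemma intCast_mul_mem_centralCoords (k : ℤ) : k * (2 * ω - 1) ∈ centralCoords := by
  rw [← zsmul_eq_mul]
  have h2ω : 2 * ω - 1 ∈ centralCoords := show heisenberg 0 _ ∈ Γ from T_eq_heisenberg ▸ T_mem
  exact zsmul_mem h2ω k

lemma heisenberg_mem {b c : ℂ} (hb : b ∈ O11Ring) (hc : c ∈ O11Ring)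
    (hbc : c + conj c = -(b * conj b)) : heisenberg b c ∈ Γ := by
  obtain ⟨-, c₀, hc₀, hbc₀, hN⟩ := mem_horizontalCoords hb
  obtain ⟨k, hk⟩ := exists_eq_intCast_mul_of_add_conj_eq_zero (sub_mem hc hc₀)
    (by rw [map_sub]; linear_combination hbc - hbc₀)
  have := mul_mem hN (intCast_mul_mem_centralCoords k)
  rwa [heisenberg_mul, ← hk, map_zero, add_zero, mul_zero, sub_zero, add_sub_cancel] at this

lemma apply_zero_eq_zero_of_mulVec_eq_smul {M : Matrix (Fin 3) (Fin 3) ℂ} {c : ℂ}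
    (h : M *ᵥ ![1, 0, 0] = c • ![1, 0, 0]) : M 1 0 = 0 ∧ M 2 0 = 0 :=
  ⟨by simpa [Matrix.mulVec, dotProduct, Fin.sum_univ_three] using congrFun h 1,
   by simpa [Matrix.mulVec, dotProduct, Fin.sum_univ_three] using congrFun h 2⟩

lemma exists_eq_smul_diagonal_mul_heisenberg {a b c d e f g : ℂ} (ha : a ∈ O11Ring)
    (hb : b ∈ O11Ring) (hc : c ∈ O11Ring) (hd : d ∈ O11Ring) (hg : g ∈ O11Ring)
    (hU : (!![a, b, c; 0, d, e; 0, f, g])ᴴ * Jmat * !![a, b, c; 0, d, e; 0, f, g] = Jmat) :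
    ∃ ε δ b' c' : ℂ, (ε = 1 ∨ ε = -1) ∧ (δ = 1 ∨ δ = -1) ∧ b' ∈ O11Ring ∧ c' ∈ O11Ring ∧
      c' + conj c' = -(b' * conj b') ∧
      !![a, b, c; 0, d, e; 0, f, g] = ε • (diagonal ![1, δ, 1] * heisenberg b' c') := by
  have hU' : ∀ i j, _ := fun i j => congrFun (congrFun hU i) j
  have e01 := hU' 0 1
  have e02 := hU' 0 2
  have e11 := hU' 1 1
  have e12 := hU' 1 2
  have e22 := hU' 2 2
  simp only [Jmat, Matrix.mul_apply, conjTranspose_apply, of_apply, cons_val', cons_val_zero,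
    cons_val_fin_one, RCLike.star_def, Fin.sum_univ_three, cons_val_one, map_zero, zero_mul,
    add_zero, cons_val, mul_zero, mul_one, zero_add, mul_eq_zero, map_eq_zero] at e01 e02 e11 e12 e22
  obtain ⟨rfl, hg_sign⟩ := eq_and_eq_one_or_neg_one_of_conj_mul_eq_one ha hg e02
  obtain ⟨hgc, hgg⟩ := conj_eq_self_and_mul_self_eq_one hg_sign
  obtain rfl : f = 0 := e01.resolve_left (left_ne_zero_of_mul_eq_one hgg)
  simp only [map_zero, zero_mul, mul_zero, zero_add, add_zero, hgc] at e11 e12 e22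
  obtain ⟨-, hd_sign⟩ := eq_and_eq_one_or_neg_one_of_conj_mul_eq_one hd hd e11
  obtain ⟨hdc, hdd⟩ := conj_eq_self_and_mul_self_eq_one hd_sign
  rw [hdc] at e12
  obtain rfl : e = -(d * g * conj b) := by linear_combination d * e12 - e * hdd
  refine ⟨g, g * d, g * b, g * c, hg_sign, ?_, mul_mem hg hb, mul_mem hg hc, ?_, ?_⟩
  · rcases hg_sign with rfl | rfl <;> rcases hd_sign with rfl | rfl <;> simp
  · simp only [map_mul, map_neg, hdc, hgc, conj_conj] at e22 ⊢
    linear_combination e22 - g * g * b * conj b * hdd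
  · ext i j
    fin_cases i <;> fin_cases j <;> simp [heisenberg, hgc, ← mul_assoc, hgg]

lemma diagonal_mem {δ : ℂ} (hδ : δ = 1 ∨ δ = -1) : diagonal ![1, δ, 1] ∈ Γ := by
  rcases hδ with rfl | rfl
  · convert one_mem Γ
    ext i j; fin_cases i <;> fin_cases j <;> rfl
  · exact R₁_eq_diagonal ▸ R₁_mem

/-- **Generators of the stabiliser of `q∞` in `PU(2,1;O11)`**: every matrix
`M ∈ U(2,1;O11)` fixing `q∞` (i.e. mapping `(1,0,0)ᵗ` to a scalar multiple of itself)
agrees, up to sign, with an element of the subgroup of `GL(3,ℂ)` generated by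
`R₁, R₂, R₃, T`. -/
theorem stabiliser_O11_generated
    (M : Matrix (Fin 3) (Fin 3) ℂ)
    (hM : ∀ i j, M i j ∈ O11)
    (hU : Mᴴ * Jmat * M = Jmat)
    (hfix : ∃ c : ℂ, M.mulVec ![1,0,0] = c • ![1,0,0]) :
    ∃ U ∈ Subgroup.closure
        ({toGL R₁ hR₁, toGL R₂ hR₂, toGL R₃ hR₃, toGL T hT} :
          Set (GL (Fin 3) ℂ)),
      (U : Matrix (Fin 3) (Fin 3) ℂ) = M ∨ (U : Matrix (Fin 3) (Fin 3) ℂ) = -M := by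
  obtain ⟨s, hs⟩ := hfix
  obtain ⟨h10, h20⟩ := apply_zero_eq_zero_of_mulVec_eq_smul hs
  have hM_eq : M = !![M 0 0, M 0 1, M 0 2; 0, M 1 1, M 1 2; 0, M 2 1, M 2 2] := by
    ext i j; fin_cases i <;> fin_cases j <;> simp [h10, h20]
  obtain ⟨ε, δ, b, c, hε, hδ, hb, hc, hbc, hεδ⟩ :=
    exists_eq_smul_diagonal_mul_heisenberg (hM 0 0) (hM 0 1) (hM 0 2) (hM 1 1) (hM 2 2)
      (by rwa [← hM_eq])
  obtain ⟨U, hU_mem, hU_eq⟩ := mul_mem (diagonal_mem hδ) (heisenberg_mem hb hc hbc)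
  refine ⟨U, hU_mem, ?_⟩
  rw [hM_eq, hεδ, ← hU_eq]
  rcases hε with rfl | rfl <;> simp

end
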